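/- arXiv:2604.00720 — 2 statements merged into one kernel-verified Lean document; each statement's English description precedes it below -/
import Mathlib

section
/- For every n ≥ 3, the set of special orthogonal matrices with rational entries is dense in the real special orthogonal group: for every real n×n matrix A with Aᵀ·A = 1 and det A = 1, and every ε > 0, there exists an n×n matrix B all of whose entries are rational numbers, satisfying Bᵀ·B = 1, det B = 1, and ‖A − B‖ < ε (entrywise, or in any fixed norm on the matrix space). -/
/-
The Cayley transform `S ↦ (1 - S)(1 + S)⁻¹` is an involution that exchanges skew-symmetric
matrices and orthogonal matrices without eigenvalue `-1`; its values on skew matrices have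
determinant `1`. It is continuous and commutes with `ℚ → ℝ`, so approximating the skew matrix
`cayley C` by rational skew matrices approximates `C` by rational special orthogonal matrices.
An arbitrary `A ∈ SO(n, ℝ)` is reduced to this case by a sign matrix `D = diagonal (±1)` with
`det (A + D) ≠ 0`: since `det (A + diagonal d)` is affine in each `dᵢ`, its values at `dᵢ = ±1`
average to its value at `dᵢ = 0`, so the signs can be chosen one at a time starting from `d = 0`.
-/

open Matrix Filter Topology

namespace Matrix

variable {ι : Type*} [Fintype ι] [DecidableEq ι]

section CommRing

variable {R : Type*} [CommRing R]

theorem det_add_diagonal_update (A : Matrix ι ι R) (d : ι → R) (i : ι) (c : R) :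
    (A + diagonal (Function.update d i c)).det =
      (A + diagonal d).det + (c - d i) * (updateRow (A + diagonal d) i (Pi.single i 1)).det := by
  have hrow : A + diagonal (Function.update d i c) =
      updateRow (A + diagonal d) i ((A + diagonal d) i + (c - d i) • Pi.single i 1) := by
    ext j k
    rcases eq_or_ne j i with rfl | hj
    · rcases eq_or_ne j k with rfl | hk <;> simp [*]
    · simp [hj, diagonal_apply]
  rw [hrow, det_updateRow_add, det_updateRow_smul, updateRow_eq_self]

theorem exists_det_add_diagonal_update_units_ne_zero [IsDomain R] [NeZero (2 : R)]
    {A : Matrix ι ι R} {d : ι → R} {i : ι} (hdi : d i = 0) (hA : (A + diagonal d).det ≠ 0) :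
    ∃ c : ℤˣ, (A + diagonal (Function.update d i ((c : ℤ) : R))).det ≠ 0 := by
  by_contra! h
  have hpos := h 1
  have hneg := h (-1)
  simp only [det_add_diagonal_update, hdi, Units.val_one, Units.val_neg, Int.cast_one,
    Int.cast_neg, sub_zero] at hpos hneg
  refine hA (mul_left_cancel₀ (two_ne_zero (α := R)) ?_)
  linear_combination hpos + hneg

theorem exists_det_add_diagonal_units_ne_zero [IsDomain R] [NeZero (2 : R)]
    {A : Matrix ι ι R} (hA : A.det ≠ 0) :
    ∃ u : ι → ℤˣ, (A + diagonal fun i => ((u i : ℤ) : R)).det ≠ 0 := by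
  suffices key : ∀ (s : Finset ι) (u : ι → ℤˣ),
      (A + diagonal fun i => if i ∈ s then 0 else ((u i : ℤ) : R)).det ≠ 0 →
        ∃ u' : ι → ℤˣ, (A + diagonal fun i => ((u' i : ℤ) : R)).det ≠ 0 from
    key Finset.univ 1 (by simpa using hA)
  intro s
  induction s using Finset.induction_on with
  | empty => intro u hu; exact ⟨u, by simpa using hu⟩
  | insert i s hi ih =>
    intro u hu
    obtain ⟨c, hc⟩ := exists_det_add_diagonal_update_units_ne_zero (i := i) (by simp) hu
    have hupd : (fun j => if j ∈ s then 0 else ((Function.update u i c j : ℤ) : R)) =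
        Function.update (fun j => if j ∈ insert i s then 0 else ((u j : ℤ) : R)) i
          ((c : ℤ) : R) := by
      ext j
      rcases eq_or_ne j i with rfl | hj <;> simp [*]
    exact ih (Function.update u i c) (hupd ▸ hc)

theorem diagonal_units_mul_self (u : ι → ℤˣ) :
    (diagonal fun i => ((u i : ℤ) : R)) * diagonal (fun i => ((u i : ℤ) : R)) = 1 := by
  rw [diagonal_mul_diagonal, ← diagonal_one]
  congr 1; ext i
  rw [← Int.cast_mul, ← Units.val_mul, Int.units_mul_self, Units.val_one, Int.cast_one]

theorem transpose_mul_self_mul {A B : Matrix ι ι R} (hA : Aᵀ * A = 1) (hB : Bᵀ * B = 1) :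
    (A * B)ᵀ * (A * B) = 1 := by
  rw [transpose_mul, Matrix.mul_assoc, ← Matrix.mul_assoc Aᵀ, hA, Matrix.one_mul, hB]

end CommRing

section Cayley

variable {R : Type*} [CommRing R]

noncomputable def cayley (S : Matrix ι ι R) : Matrix ι ι R := (1 - S) * (1 + S)⁻¹

variable {S C : Matrix ι ι R}

theorem cayley_mul_one_add (h : IsUnit (1 + S).det) : cayley S * (1 + S) = 1 - S := by
  rw [cayley, Matrix.mul_assoc, nonsing_inv_mul _ h, Matrix.mul_one]

theorem one_add_mul_cayley (h : IsUnit (1 + S).det) : (1 + S) * cayley S = 1 - S := by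
  have hcomm : (1 + S) * (1 - S) = (1 - S) * (1 + S) := by noncomm_ring
  rw [cayley, ← Matrix.mul_assoc, hcomm, Matrix.mul_assoc, mul_nonsing_inv _ h, Matrix.mul_one]

theorem det_one_sub_eq_det_one_add (hS : Sᵀ = -S) : (1 - S).det = (1 + S).det := by
  rw [← det_transpose (1 + S), transpose_add, transpose_one, hS, sub_eq_add_neg]

theorem cayley_transpose_mul_cayley (hS : Sᵀ = -S) (h : IsUnit (1 + S).det) :
    (cayley S)ᵀ * cayley S = 1 := by
  have h' : IsUnit (1 - S) := by
    rw [isUnit_iff_isUnit_det, det_one_sub_eq_det_one_add hS]; exact h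
  have htr : (1 - S) * (cayley S)ᵀ = 1 + S := by
    simpa [transpose_add, transpose_sub, hS, sub_eq_add_neg] using
      congrArg transpose (cayley_mul_one_add h)
  refine h'.mul_left_cancel ?_
  rw [← Matrix.mul_assoc, htr, one_add_mul_cayley h, Matrix.mul_one]

theorem det_cayley (hS : Sᵀ = -S) (h : IsUnit (1 + S).det) : (cayley S).det = 1 := by
  refine h.mul_right_cancel ?_
  rw [← det_mul, cayley_mul_one_add h, det_one_sub_eq_det_one_add hS, one_mul]

theorem one_add_mul_one_add_cayley (h : IsUnit (1 + C).det) :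
    (1 + C) * (1 + cayley C) = 2 := by
  rw [Matrix.mul_add, one_add_mul_cayley h, Matrix.mul_one, add_add_sub_cancel,
    one_add_one_eq_two]

theorem isUnit_det_one_add_cayley [Invertible (2 : R)] (h : IsUnit (1 + C).det) :
    IsUnit (1 + cayley C).det := by
  have h2 : IsUnit (2 : Matrix ι ι R) := by
    simpa only [map_ofNat] using (isUnit_of_invertible (2 : R)).map (scalar ι)
  rw [← isUnit_iff_isUnit_det]
  exact isUnit_of_mul_isUnit_right (one_add_mul_one_add_cayley h ▸ h2)

theorem cayley_cayley [Invertible (2 : R)] (h : IsUnit (1 + C).det) : cayley (cayley C) = C := by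
  have h' := isUnit_det_one_add_cayley h
  refine ((isUnit_iff_isUnit_det _).2 h').mul_right_cancel ?_
  have hCS : C * cayley C = 1 - C - cayley C := by
    rw [← one_add_mul_cayley h, Matrix.add_mul, Matrix.one_mul]; abel
  rw [cayley_mul_one_add h', Matrix.mul_add, Matrix.mul_one, hCS]; abel

theorem transpose_cayley (hC : Cᵀ * C = 1) (h : IsUnit (1 + C).det) :
    (cayley C)ᵀ = -cayley C := by
  refine ((isUnit_iff_isUnit_det _).2 h).mul_right_cancel ?_
  have htr : (cayley C)ᵀ * (1 + Cᵀ) = 1 - Cᵀ := by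
    simpa [transpose_add, transpose_sub] using congrArg transpose (one_add_mul_cayley h)
  calc (cayley C)ᵀ * (1 + C) = (cayley C)ᵀ * (1 + Cᵀ) * C := by
        rw [Matrix.mul_assoc, Matrix.add_mul, hC, Matrix.one_mul, add_comm]
    _ = -cayley C * (1 + C) := by
        rw [htr, Matrix.sub_mul, hC, Matrix.one_mul, Matrix.neg_mul, cayley_mul_one_add h, neg_sub]

theorem det_eq_one_of_isUnit_det_one_add [Invertible (2 : R)] (hC : Cᵀ * C = 1)
    (h : IsUnit (1 + C).det) : C.det = 1 := by
  rw [← cayley_cayley h]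
  exact det_cayley (transpose_cayley hC h) (isUnit_det_one_add_cayley h)

end Cayley

theorem det_one_add_ne_zero_of_transpose_eq_neg {K : Type*} [Field K] [LinearOrder K]
    [IsStrictOrderedRing K] {S : Matrix ι ι K} (hS : Sᵀ = -S) : (1 + S).det ≠ 0 := by
  rw [Ne, ← exists_mulVec_eq_zero_iff]
  rintro ⟨v, hv, hSv⟩
  have hskew : v ⬝ᵥ (S *ᵥ v) = 0 := by
    have h := dotProduct_mulVec v S v
    rw [← mulVec_transpose, hS, neg_mulVec, neg_dotProduct, dotProduct_comm (S *ᵥ v) v] at h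
    linarith
  have : v ⬝ᵥ v = 0 := by
    simpa [add_mulVec, dotProduct_add, hskew] using congrArg (v ⬝ᵥ ·) hSv
  exact hv (dotProduct_self_eq_zero.1 this)

theorem map_nonsing_inv {K L : Type*} [Field K] [Field L] (f : K →+* L) (M : Matrix ι ι K) :
    M⁻¹.map f = (M.map f)⁻¹ := by
  have hdet : f M.det = (M.map f).det := f.map_det M
  have hadj : M.adjugate.map f = (M.map f).adjugate := f.map_adjugate M
  rw [inv_def, inv_def, Ring.inverse_eq_inv', Ring.inverse_eq_inv', ← hdet, ← hadj]
  ext i j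
  simp

theorem map_cayley {K L : Type*} [Field K] [Field L] (f : K →+* L) (S : Matrix ι ι K) :
    (cayley S).map f = cayley (S.map f) := by
  rw [cayley, cayley, Matrix.map_mul, map_nonsing_inv, ← f.mapMatrix_apply, ← f.mapMatrix_apply,
    map_sub, map_add, map_one]
  rfl

theorem continuousAt_cayley {K : Type*} [Field K] [TopologicalSpace K]
    [IsTopologicalDivisionRing K] {S : Matrix ι ι K} (h : (1 + S).det ≠ 0) :
    ContinuousAt cayley S := by
  have hinv : ContinuousAt Inv.inv (1 + S) :=
    continuousAt_matrix_inv _ (by rw [Ring.inverse_eq_inv']; exact continuousAt_inv₀ h)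
  exact (continuous_const.sub continuous_id).continuousAt.mul
    (hinv.comp (continuous_const.add continuous_id).continuousAt)

theorem denseRange_map_ratCast {m n : Type*} :
    DenseRange (fun M : Matrix m n ℚ => M.map ((↑) : ℚ → ℝ)) :=
  DenseRange.piMap fun _ => DenseRange.piMap fun _ => Rat.denseRange_cast

theorem exists_rat_specialOrthogonal_near (C : Matrix ι ι ℝ) (hC : Cᵀ * C = 1)
    (h : (1 + C).det ≠ 0) {ε : ℝ} (hε : 0 < ε) :
    ∃ Q : Matrix ι ι ℚ, Qᵀ * Q = 1 ∧ Q.det = 1 ∧ ∀ i j, |C i j - (Q i j : ℝ)| < ε := by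
  -- `M ↦ (M - Mᵀ) / 2` turns rational approximations of the skew matrix `S` into skew ones.
  let φ : Matrix ι ι ℝ → Matrix ι ι ℝ := fun M => cayley ((2⁻¹ : ℝ) • (M - Mᵀ))
  set S := cayley C
  have hS : Sᵀ = -S := transpose_cayley hC h.isUnit
  have hskew : (2⁻¹ : ℝ) • (S - Sᵀ) = S := by
    rw [hS, sub_neg_eq_add, ← two_smul ℝ, smul_smul, inv_mul_cancel₀ two_ne_zero, one_smul]
  have hφS : φ S = C := by
    simp only [φ, hskew]
    exact cayley_cayley h.isUnit
  have hφ : ContinuousAt φ S :=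
    (continuousAt_cayley (det_one_add_ne_zero_of_transpose_eq_neg hS)).comp_of_eq (by fun_prop)
      hskew
  have hnear : ∀ᶠ M in 𝓝 S, ∀ i j, |C i j - φ M i j| < ε := by
    simp only [eventually_all]
    intro i j
    filter_upwards [(tendsto_pi_nhds.1 (tendsto_pi_nhds.1 hφ.tendsto i) j).eventually
      (Metric.ball_mem_nhds _ hε)] with M hM
    rwa [hφS, Real.dist_eq, abs_sub_comm] at hM
  obtain ⟨M, hM⟩ := denseRange_map_ratCast.mem_nhds hnear
  set T : Matrix ι ι ℚ := (2⁻¹ : ℚ) • (M - Mᵀ)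
  have hT : Tᵀ = -T := by
    simp only [T, transpose_smul, transpose_sub, transpose_transpose, smul_sub, neg_sub]
  have hT1 : IsUnit (1 + T).det := (det_one_add_ne_zero_of_transpose_eq_neg hT).isUnit
  have hcast : (cayley T).map ((↑) : ℚ → ℝ) = φ (M.map (↑)) := by
    rw [← Rat.coe_castHom, map_cayley]
    congr 1
    ext i j
    simp [T]
  refine ⟨cayley T, cayley_transpose_mul_cayley hT hT1, det_cayley hT hT1, fun i j => ?_⟩
  simpa [← hcast] using hM i j

end Matrix

theorem so_rational_dense_general (n : ℕ)
    (A : Matrix (Fin n) (Fin n) ℝ) (hA : Aᵀ * A = 1) (hdetA : A.det = 1)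
    (ε : ℝ) (hε : 0 < ε) :
    ∃ B : Matrix (Fin n) (Fin n) ℝ,
      (∀ i j, ∃ q : ℚ, B i j = (q : ℝ)) ∧
      Bᵀ * B = 1 ∧ B.det = 1 ∧ ∀ i j, |A i j - B i j| < ε := by
  obtain ⟨u, hu⟩ := exists_det_add_diagonal_units_ne_zero (hdetA ▸ one_ne_zero : A.det ≠ 0)
  set D : Matrix (Fin n) (Fin n) ℝ := diagonal fun i => ((u i : ℤ) : ℝ)
  have hDD : D * D = 1 := diagonal_units_mul_self u
  have hD : Dᵀ * D = 1 := by rw [diagonal_transpose, hDD]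
  set C := A * D
  have hAC : A = C * D := by rw [Matrix.mul_assoc, hDD, Matrix.mul_one]
  have hC1 : (1 + C).det ≠ 0 := by
    rw [show 1 + C = (A + D) * D by rw [Matrix.add_mul, hDD, add_comm], det_mul]
    exact mul_ne_zero hu (det_ne_zero_of_right_inverse hDD)
  have hC : Cᵀ * C = 1 := transpose_mul_self_mul hA hD
  have hdetD : D.det = 1 := by
    rwa [hAC, det_mul, det_eq_one_of_isUnit_det_one_add hC hC1.isUnit, one_mul] at hdetA
  obtain ⟨Q, hQ, hdetQ, hQC⟩ := exists_rat_specialOrthogonal_near C hC hC1 hε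
  set Q' : Matrix (Fin n) (Fin n) ℝ := (Rat.castHom ℝ).mapMatrix Q
  refine ⟨Q' * D, fun i j => ⟨Q i j * (u j : ℤ), by simp [D, Q']⟩, ?_, ?_, fun i j => ?_⟩
  · refine transpose_mul_self_mul ?_ hD
    have h := congrArg (Rat.castHom ℝ).mapMatrix hQ
    simp only [map_mul, map_one, RingHom.mapMatrix_apply, transpose_map] at h
    exact h
  · rw [det_mul, hdetD, mul_one, ← RingHom.map_det, hdetQ, map_one]
  · rw [hAC, mul_diagonal, mul_diagonal, ← sub_mul, abs_mul, ← Int.cast_abs,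
      Int.isUnit_iff_abs_eq.1 (u j).isUnit, Int.cast_one, mul_one]
    simpa [Q'] using hQC i j

/-- For every `n ≥ 3`, the rational special orthogonal matrices are dense in `SO(n, ℝ)`:
given a real `n × n` matrix `A` with `Aᵀ * A = 1` and `det A = 1`, and `ε > 0`, there is a
matrix `B` with rational entries satisfying `Bᵀ * B = 1`, `det B = 1`, and all entries of
`A - B` of absolute value less than `ε`. -/
theorem so_rational_dense (n : ℕ) (hn : 3 ≤ n)
    (A : Matrix (Fin n) (Fin n) ℝ) (hA : Aᵀ * A = 1) (hdetA : A.det = 1)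
    (ε : ℝ) (hε : 0 < ε) :
    ∃ B : Matrix (Fin n) (Fin n) ℝ,
      (∀ i j, ∃ q : ℚ, B i j = (q : ℝ)) ∧
      Bᵀ * B = 1 ∧ B.det = 1 ∧ ∀ i j, |A i j - B i j| < ε :=
  so_rational_dense_general n A hA hdetA ε hε
end

section
/- For every n ≥ 1, the rational points of the unit sphere are dense in it: for every x ∈ ℝⁿ with ‖x‖ = 1 (Euclidean norm) and every ε > 0, there exists y ∈ ℝⁿ all of whose coordinates are rational numbers, with ‖y‖ = 1 and ‖x − y‖ < ε. -/
/-!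
For a unit vector `e`, the map `v ↦ (2⟪e, v⟫ / ‖v‖²) • v - e` sends every nonzero `v` to the
second intersection point of the unit sphere with the line through `-e` in direction `v`. It is
a rational function with rational coefficients, so it maps rational vectors to rational points of
the sphere, and it is continuous away from `0`. Every point `x ≠ -e` of the sphere is the image of
`x + e ≠ 0`, so approximating `x + e` by rational vectors approximates `x` by rational points of
the sphere. The same argument works over any dense subfield of `ℝ`.
-/

open RealInnerProductSpace

section SecantProjection

variable {E : Type*} [NormedAddCommGroup E] [InnerProductSpace ℝ E]

/-- At `v = 0` the junk value `0 / 0 = 0` gives `-e`, which is still on the sphere. -/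
noncomputable def secantProj (e v : E) : E :=
  (2 * ⟪e, v⟫ / ‖v‖ ^ 2) • v - e

theorem norm_secantProj {e : E} (he : ‖e‖ = 1) (v : E) : ‖secantProj e v‖ = 1 := by
  rcases eq_or_ne v 0 with rfl | hv
  · simp [secantProj, he]
  have hv2 : ‖v‖ ^ 2 ≠ 0 := pow_ne_zero 2 (norm_ne_zero_iff.mpr hv)
  have hsq : ‖secantProj e v‖ ^ 2 = 1 := by
    rw [secantProj, norm_sub_sq_real, real_inner_smul_left, norm_smul, real_inner_comm v e]
    simp only [Real.norm_eq_abs, mul_pow, sq_abs, he]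
    field_simp
    ring
  exact (pow_eq_one_iff_of_nonneg (norm_nonneg _) two_ne_zero).mp hsq

theorem secantProj_add_self {e x : E} (he : ‖e‖ = 1) (hx : ‖x‖ = 1) (hxe : x + e ≠ 0) :
    secantProj e (x + e) = x := by
  have hnorm : ‖x + e‖ ^ 2 = 2 + 2 * ⟪x, e⟫ := by
    rw [norm_add_sq_real, hx, he]; ring
  have hinner : 2 * ⟪e, x + e⟫ = 2 + 2 * ⟪x, e⟫ := by
    rw [inner_add_right, real_inner_comm e x, real_inner_self_eq_norm_sq, he]; ring
  have hne : ‖x + e‖ ^ 2 ≠ 0 := pow_ne_zero 2 (norm_ne_zero_iff.mpr hxe)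
  rw [secantProj, hinner, ← hnorm, div_self hne, one_smul, add_sub_cancel_right]

theorem continuousAt_secantProj (e : E) {v : E} (hv : v ≠ 0) : ContinuousAt (secantProj e) v := by
  have hv2 : ‖v‖ ^ 2 ≠ 0 := pow_ne_zero 2 (norm_ne_zero_iff.mpr hv)
  unfold secantProj
  fun_prop (disch := exact hv2)

end SecantProjection

section SubfieldPoints

variable {ι : Type*}

def subfieldPoints (K : Subfield ℝ) (ι : Type*) : Set (EuclideanSpace ℝ ι) :=
  {y | ∀ i, y i ∈ K}

theorem dense_subfieldPoints {K : Subfield ℝ} (hK : Dense (K : Set ℝ)) :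
    Dense (subfieldPoints K ι) :=
  ((dense_pi Set.univ fun _ _ => hK).preimage (PiLp.homeomorph 2 fun _ : ι => ℝ).isOpenMap).mono
    fun _ hy i => by exact hy i (Set.mem_univ i)

theorem secantProj_mem_subfieldPoints [Fintype ι] [DecidableEq ι] (K : Subfield ℝ) (i₀ : ι)
    {v : EuclideanSpace ℝ ι} (hv : v ∈ subfieldPoints K ι) :
    secantProj (EuclideanSpace.single i₀ 1) v ∈ subfieldPoints K ι := by
  have hnorm : ‖v‖ ^ 2 ∈ K := by
    rw [EuclideanSpace.norm_sq_eq]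
    exact K.sum_mem fun i _ => by simpa [Real.norm_eq_abs, sq_abs] using K.pow_mem (hv i) 2
  have hinner : ⟪EuclideanSpace.single i₀ 1, v⟫ ∈ K := by
    simpa [EuclideanSpace.inner_single_left] using hv i₀
  intro i
  simp only [secantProj, PiLp.sub_apply, PiLp.smul_apply, smul_eq_mul, PiLp.single_apply]
  refine K.sub_mem (K.mul_mem (K.div_mem (K.mul_mem ?_ hinner) hnorm) (hv i)) ?_
  · exact ofNat_mem K 2
  · split_ifs <;> simp

theorem sphere_subset_closure_sphere_inter_subfieldPoints [Fintype ι] {K : Subfield ℝ}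
    (hK : Dense (K : Set ℝ)) :
    Metric.sphere (0 : EuclideanSpace ℝ ι) 1 ⊆
      closure (Metric.sphere 0 1 ∩ subfieldPoints K ι) := by
  classical
  intro x hx
  rw [mem_sphere_zero_iff_norm] at hx
  obtain ⟨i₀, -⟩ : ∃ i, x i ≠ 0 := by
    by_contra! h
    simp [show x = 0 from PiLp.ext h] at hx
  set e : EuclideanSpace ℝ ι := EuclideanSpace.single i₀ 1
  have he : ‖e‖ = 1 := by simp [e]
  have hmaps : secantProj e '' subfieldPoints K ι ⊆ Metric.sphere 0 1 ∩ subfieldPoints K ι := by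
    rintro _ ⟨v, hv, rfl⟩
    exact ⟨mem_sphere_zero_iff_norm.mpr (norm_secantProj he v),
      secantProj_mem_subfieldPoints K i₀ hv⟩
  rcases eq_or_ne (x + e) 0 with hxe | hxe
  · have h0 : secantProj e 0 = x := by
      simp [secantProj, eq_neg_of_add_eq_zero_left hxe]
    exact subset_closure (h0 ▸ hmaps ⟨0, fun i => by simp, rfl⟩)
  · refine closure_mono hmaps ?_
    rw [← secantProj_add_self he hx hxe]
    exact mem_closure_image (continuousAt_secantProj e hxe) (dense_subfieldPoints hK _)

end SubfieldPoints

theorem rational_points_dense_on_sphere_general (n : ℕ)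
    (x : EuclideanSpace ℝ (Fin n)) (hx : ‖x‖ = 1) (ε : ℝ) (hε : 0 < ε) :
    ∃ y : EuclideanSpace ℝ (Fin n),
      (∀ i, ∃ q : ℚ, y i = (q : ℝ)) ∧ ‖y‖ = 1 ∧ ‖x - y‖ < ε := by
  have hℚ : Dense ((Rat.castHom ℝ).fieldRange : Set ℝ) := by
    rw [RingHom.coe_fieldRange]
    exact Rat.denseRange_cast
  obtain ⟨y, ⟨hy_sphere, hy_rat⟩, hxy⟩ := Metric.mem_closure_iff.mp
    (sphere_subset_closure_sphere_inter_subfieldPoints hℚ (mem_sphere_zero_iff_norm.mpr hx)) ε hε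
  refine ⟨y, fun i => ?_, mem_sphere_zero_iff_norm.mp hy_sphere, by rwa [← dist_eq_norm]⟩
  obtain ⟨q, hq⟩ := RingHom.mem_fieldRange.mp (hy_rat i)
  exact ⟨q, hq.symm⟩

/-- For every `n ≥ 1`, points with rational coordinates on the unit sphere of `ℝⁿ`
(Euclidean norm) are dense in the unit sphere. -/
theorem rational_points_dense_on_sphere (n : ℕ) (hn : 1 ≤ n)
    (x : EuclideanSpace ℝ (Fin n)) (hx : ‖x‖ = 1) (ε : ℝ) (hε : 0 < ε) :
    ∃ y : EuclideanSpace ℝ (Fin n),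
      (∀ i, ∃ q : ℚ, y i = (q : ℝ)) ∧ ‖y‖ = 1 ∧ ‖x - y‖ < ε :=
  rational_points_dense_on_sphere_general n x hx ε hε
end
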